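/- arXiv:2503.23310 — 2 statements merged into one kernel-verified Lean document; each statement's English description precedes it below -/
import Mathlib

section
/- Let n ≥ 2, p > 1, and let T : C_e^∞(S^{n-1}) → C_e^∞(S^{n-1}) be a linear operator. Suppose g ∈ C_e^∞(S^{n-1}) is strictly positive and g^{p-1} is NOT positively associated with T, i.e., there exists h ∈ C_e^∞(S^{n-1}) with Th(x) ≥ 0 for all x ∈ S^{n-1} but ∫_{S^{n-1}} g^{p-1}(x) h(x) dx < 0. Then there exists a strictly positive function f ∈ C_e^∞(S^{n-1}) such that Tf(x) ≤ Tg(x) for every x ∈ S^{n-1}, but ‖f‖_{L_p(S^{n-1})} > ‖g‖_{L_p(S^{n-1})}. -/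
open MeasureTheory Real
open scoped RealInnerProductSpace ComplexOrder

noncomputable section

abbrev Euc (n : ℕ) := EuclideanSpace ℝ (Fin n)
abbrev Sph (n : ℕ) := Metric.sphere (0 : Euc n) 1

/-- The surface measure on the unit sphere `S^{n-1}`. -/
def sphμ (n : ℕ) : Measure (Sph n) := (volume : Measure (Euc n)).toSphere

/-- Radial projection of a nonzero vector to the unit sphere. -/
def sphProj {n : ℕ} (x : Euc n) (hx : x ≠ 0) : Sph n :=
  ⟨‖x‖⁻¹ • x, by
    rw [mem_sphere_zero_iff_norm, norm_smul, norm_inv, norm_norm,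
      inv_mul_cancel₀ (norm_ne_zero_iff.mpr hx)]⟩

/-- The homogeneous of degree `s` extension of a function on the sphere:
`x ↦ h(x/|x|₂)·|x|₂^s` (with junk value `0` at the origin). -/
def homExt {n : ℕ} (h : Sph n → ℝ) (s : ℝ) (x : Euc n) : ℝ :=
  letI := Classical.decEq (Euc n)
  if hx : x = 0 then 0 else h (sphProj x hx) * ‖x‖ ^ s

/-- A function on the sphere is infinitely differentiable iff its `0`-homogeneous
extension is `C^∞` away from the origin. -/
def SphSmooth {n : ℕ} (h : Sph n → ℝ) : Prop :=
  ContDiffOn ℝ (⊤ : ℕ∞) (homExt h 0) {x : Euc n | x ≠ 0}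

/-- A function on the sphere is even. -/
def SphEven {n : ℕ} (h : Sph n → ℝ) : Prop := ∀ x : Sph n, h (-x) = h x

/-- The `L_p` norm on the sphere. -/
def sphLp {n : ℕ} (p : ℝ) (f : Sph n → ℝ) : ℝ :=
  (∫ x, |f x| ^ p ∂ sphμ n) ^ (1 / p)

/-- The Fourier transform with the convention `φ̂(x) = ∫ φ(ξ) e^{-i⟨x,ξ⟩} dξ`. -/
def ftP {n : ℕ} (φ : Euc n → ℝ) (x : Euc n) : ℂ :=
  ∫ ξ : Euc n, (φ ξ : ℂ) * Complex.exp (-(Complex.I * (⟪x, ξ⟫ : ℂ)))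

/-- The pairing `⟨h·r^s, φ⟩ = ∫ h(x/|x|₂)|x|₂^s φ(x) dx` of the tempered distribution
`h·r^s` with a complex-valued function. -/
def rpowPairC {n : ℕ} (h : Sph n → ℝ) (s : ℝ) (φ : Euc n → ℂ) : ℂ :=
  ∫ x : Euc n, (homExt h s x : ℂ) * φ x

/-- Real version of the pairing `⟨h·r^s, φ⟩`. -/
def rpowPairR {n : ℕ} (h : Sph n → ℝ) (s : ℝ) (φ : Euc n → ℝ) : ℝ :=
  ∫ x : Euc n, homExt h s x * φ x

/-- The Fourier transform of the tempered distribution `c • h·r^s` is positive on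
`ℝⁿ \ {0}`: it is `≥ 0` on every nonnegative Schwartz function supported in `ℝⁿ \ {0}`. -/
def FTPosAwayZero {n : ℕ} (c : ℝ) (h : Sph n → ℝ) (s : ℝ) : Prop :=
  ∀ φ : SchwartzMap (Euc n) ℝ, (∀ x, 0 ≤ φ x) → tsupport ⇑φ ⊆ {(0 : Euc n)}ᶜ →
    0 ≤ (c : ℂ) * rpowPairC h s (ftP ⇑φ)

/-- The tempered distribution `h·r^s` is positive definite: its Fourier transform is `≥ 0`
on every nonnegative even Schwartz function. -/
def IsPosDefDist {n : ℕ} (h : Sph n → ℝ) (s : ℝ) : Prop :=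
  ∀ φ : SchwartzMap (Euc n) ℝ, (∀ x, 0 ≤ φ x) → (∀ x, φ (-x) = φ x) →
    0 ≤ rpowPairC h s (ftP ⇑φ)

/-- The `q`-cosine transform `C_q f(ξ) = ∫_{S^{n-1}} |⟨x,ξ⟩|^q f(x) dx`. -/
def cosT {n : ℕ} (q : ℝ) (f : Sph n → ℝ) (ξ : Euc n) : ℝ :=
  ∫ x, |⟪(x : Euc n), ξ⟫| ^ q * f x ∂ sphμ n

-- auxiliary lemmas
lemma homExt_coe_sphere {n : ℕ} (u : Sph n → ℝ) (x : Sph n) :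
    homExt u 0 (x : Euc n) = u x := by
  have hnorm : ‖(x : Euc n)‖ = 1 := mem_sphere_zero_iff_norm.mp x.2
  have hx0 : (x : Euc n) ≠ 0 := by
    intro h; rw [h, norm_zero] at hnorm; norm_num at hnorm
  unfold homExt
  rw [dif_neg hx0]
  have hproj : sphProj (x : Euc n) hx0 = x := by
    apply Subtype.ext; simp [sphProj, hnorm]
  rw [hproj, Real.rpow_zero, mul_one]

lemma sphSmooth_continuous {n : ℕ} {u : Sph n → ℝ} (hu : SphSmooth u) : Continuous u := by
  have h2 : Continuous (fun x : Sph n => homExt u 0 (x : Euc n)) := by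
    apply (hu.continuousOn).comp_continuous continuous_subtype_val
    intro x
    have hnorm : ‖(x : Euc n)‖ = 1 := mem_sphere_zero_iff_norm.mp x.2
    intro h; rw [h, norm_zero] at hnorm; norm_num at hnorm
  have heq : (fun x : Sph n => homExt u 0 (x : Euc n)) = u :=
    funext (homExt_coe_sphere u)
  rwa [heq] at h2

lemma sphSmooth_sub_smul {n : ℕ} {g h : Sph n → ℝ} (hg : SphSmooth g) (hh : SphSmooth h)
    (t : ℝ) : SphSmooth (fun x => g x - t * h x) := by
  have heq : homExt (fun x => g x - t * h x) 0
      = fun x => homExt g 0 x - t * homExt h 0 x := by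
    funext x
    unfold homExt
    by_cases hx : x = 0
    · simp [hx]
    · rw [dif_neg hx, dif_neg hx, dif_neg hx]; ring
  unfold SphSmooth
  rw [heq]
  exact hg.sub (contDiffOn_const.mul hh)

lemma bernoulli_key {a b p : ℝ} (ha : 0 < a) (hb : 0 < b) (hp : 1 ≤ p) :
    a ^ p + p * (a ^ (p - 1) * (b - a)) ≤ b ^ p := by
  have hs : (-1 : ℝ) ≤ (b - a) / a := by
    rw [le_div_iff₀ ha]; nlinarith
  have hber := one_add_mul_self_le_rpow_one_add hs hp
  have h1 : 1 + (b - a) / a = b / a := by field_simp; ring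
  rw [h1] at hber
  have hmul := mul_le_mul_of_nonneg_right hber (Real.rpow_nonneg ha.le p)
  have hrw : (b / a) ^ p * a ^ p = b ^ p := by
    rw [← Real.mul_rpow (div_nonneg hb.le ha.le) ha.le, div_mul_cancel₀ _ ha.ne']
  rw [hrw] at hmul
  refine le_trans (le_of_eq ?_) hmul
  rw [Real.rpow_sub_one ha.ne']
  field_simp

lemma cont_integrable {n : ℕ} {u : Sph n → ℝ} (hu : Continuous u) :
    Integrable u (sphμ n) := by
  haveI : IsFiniteMeasure (sphμ n) := by unfold sphμ; infer_instance
  exact hu.integrable_of_hasCompactSupport (HasCompactSupport.of_compactSpace u)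

set_option maxHeartbeats 1600000 in
/-- If `g^{p-1}` is not positively associated with `T`, there is a strictly
positive `f` with `Tf ≤ Tg` pointwise but `‖f‖_p > ‖g‖_p`. -/
theorem stmt_1 {n : ℕ} (hn : 2 ≤ n) {p : ℝ} (hp : 1 < p)
    (T : (Sph n → ℝ) →ₗ[ℝ] (Sph n → ℝ))
    (hT : ∀ u : Sph n → ℝ, SphSmooth u → SphEven u → SphSmooth (T u) ∧ SphEven (T u))
    (g : Sph n → ℝ) (hgs : SphSmooth g) (hge : SphEven g) (hgpos : ∀ x, 0 < g x)
    (hnotassoc : ∃ h : Sph n → ℝ, SphSmooth h ∧ SphEven h ∧ (∀ x, 0 ≤ T h x) ∧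
      (∫ x, g x ^ (p - 1) * h x ∂ sphμ n) < 0) :
    ∃ f : Sph n → ℝ, SphSmooth f ∧ SphEven f ∧ (∀ x, 0 < f x) ∧
      (∀ x, T f x ≤ T g x) ∧ sphLp p g < sphLp p f := by
  obtain ⟨h, hhs, hhe, hThpos, hint⟩ := hnotassoc
  have hgc : Continuous g := sphSmooth_continuous hgs
  have hhc : Continuous h := sphSmooth_continuous hhs
  -- nonempty sphere
  have hnontriv : Nontrivial (Euc n) := by
    apply Module.nontrivial_of_finrank_pos (R := ℝ)
    rw [finrank_euclideanSpace_fin]; omega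
  have hne : Nonempty (Sph n) := by
    rw [nonempty_subtype]
    exact NormedSpace.sphere_nonempty.mpr zero_le_one
  -- min of g
  obtain ⟨x0, -, hx0⟩ := isCompact_univ.exists_isMinOn (Set.univ_nonempty)
    hgc.continuousOn
  set m := g x0 with hm
  have hmpos : 0 < m := hgpos x0
  -- bound on h
  obtain ⟨C, hC⟩ := isCompact_univ.exists_bound_of_continuousOn hhc.continuousOn
  set C' := max C 1 with hC'
  have hC'pos : (0 : ℝ) < C' := lt_of_lt_of_le one_pos (le_max_right _ _)
  have hhbound : ∀ x, |h x| ≤ C' := fun x =>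
    le_trans (hC x (Set.mem_univ x)) (le_max_left _ _)
  set t := m / (2 * C') with ht
  have htpos : 0 < t := div_pos hmpos (by positivity)
  set f : Sph n → ℝ := fun x => g x - t * h x with hf
  have hfpos : ∀ x, 0 < f x := by
    intro x
    have h1 : t * h x ≤ t * C' := by
      have := (abs_le.mp (hhbound x)).2
      exact mul_le_mul_of_nonneg_left this htpos.le
    have h2 : t * C' = m / 2 := by
      rw [ht]; field_simp
    have h3 : m ≤ g x := hx0 (Set.mem_univ x)
    simp only [hf]
    nlinarith
  have hfF : f = g - t • h := by
    funext x; simp only [hf, Pi.sub_apply, Pi.smul_apply, smul_eq_mul]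
  refine ⟨f, sphSmooth_sub_smul hgs hhs t, fun x => by simp only [hf]; rw [hge x, hhe x], hfpos, ?_, ?_⟩
  · -- T f ≤ T g
    intro x
    have : T f = T g - t • T h := by rw [hfF, map_sub, LinearMap.map_smul]
    rw [this]
    simp only [Pi.sub_apply, Pi.smul_apply, smul_eq_mul]
    have := hThpos x
    nlinarith
  · -- Lp norms
    have hgP : Continuous (fun x : Sph n => g x ^ p) :=
      hgc.rpow_const (fun x => Or.inr (by positivity))
    have hlin : Continuous (fun x : Sph n => g x ^ p + p * (g x ^ (p - 1) * (f x - g x))) := by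
      have h1 : Continuous (fun x : Sph n => g x ^ (p - 1)) :=
        hgc.rpow_const (fun x => Or.inr (by linarith))
      have h2 : Continuous f := by
        exact hgc.sub (continuous_const.mul hhc)
      continuity
    have hfP : Continuous (fun x : Sph n => |f x| ^ p) := by
      have h2 : Continuous f := by
        exact hgc.sub (continuous_const.mul hhc)
      exact h2.abs.rpow_const (fun x => Or.inr (by positivity))
    have hmono : ∫ x, (g x ^ p + p * (g x ^ (p - 1) * (f x - g x))) ∂ sphμ n
        ≤ ∫ x, |f x| ^ p ∂ sphμ n := by
      apply integral_mono (cont_integrable hlin) (cont_integrable hfP)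
      intro x
      dsimp only
      rw [abs_of_pos (hfpos x)]
      exact bernoulli_key (hgpos x) (hfpos x) hp.le
    -- compute the left integral
    have hsplit : ∫ x, (g x ^ p + p * (g x ^ (p - 1) * (f x - g x))) ∂ sphμ n
        = (∫ x, g x ^ p ∂ sphμ n) + (p * (-t)) * ∫ x, g x ^ (p - 1) * h x ∂ sphμ n := by
      have hgpm : Continuous (fun x : Sph n => g x ^ (p - 1) * h x) :=
        (hgc.rpow_const (fun x => Or.inr (by linarith))).mul hhc
      have e1 : ∀ x : Sph n, g x ^ p + p * (g x ^ (p - 1) * (f x - g x))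
          = g x ^ p + (p * (-t)) * (g x ^ (p - 1) * h x) := by
        intro x; simp only [hf]; ring
      rw [integral_congr_ae (Filter.Eventually.of_forall e1)]
      rw [integral_add (cont_integrable hgP)
        ((cont_integrable hgpm).const_mul _)]
      congr 1
      simp only [← smul_eq_mul, integral_smul]
    have hstrict : (∫ x, g x ^ p ∂ sphμ n) < ∫ x, |f x| ^ p ∂ sphμ n := by
      rw [hsplit] at hmono
      have hneg : p * -t < 0 := mul_neg_of_pos_of_neg (by linarith) (by linarith)
      have hpos : 0 < p * -t * ∫ x, g x ^ (p - 1) * h x ∂ sphμ n :=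
        mul_pos_of_neg_of_neg hneg hint
      linarith
    have hgabs : (∫ x, |g x| ^ p ∂ sphμ n) = ∫ x, g x ^ p ∂ sphμ n := by
      have he : (fun x : Sph n => |g x| ^ p) = fun x => g x ^ p :=
        funext fun x => by rw [abs_of_pos (hgpos x)]
      rw [he]
    have h1p : (0:ℝ) < 1 / p := by positivity
    have hA : 0 ≤ ∫ x, g x ^ p ∂ sphμ n :=
      integral_nonneg (fun x => Real.rpow_nonneg (hgpos x).le p)
    unfold sphLp
    rw [hgabs]
    exact Real.rpow_lt_rpow hA hstrict h1p
end
end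

section
/- Let n ≥ 2, p > 1, and let T : C_e^∞(S^{n-1}) → C_e^∞(S^{n-1}) be a linear operator such that T𝟙 = c_T·𝟙 for some constant c_T > 0, where 𝟙 is the function identically equal to 1 on S^{n-1}. Suppose f ∈ C_e^∞(S^{n-1}) is positive and f^{p-1} is positively associated with T, i.e., for every h ∈ C_e^∞(S^{n-1}) with Th(x) ≥ 0 for all x ∈ S^{n-1} one has ∫_{S^{n-1}} h(x) f^{p-1}(x) dx ≥ 0. Then ‖f‖_{L_p(S^{n-1})} ≤ (|S^{n-1}|^{1/p} / c_T) · max_{z ∈ S^{n-1}} Tf(z), where |S^{n-1}| is the total surface measure of the sphere. -/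
open MeasureTheory Real
open scoped RealInnerProductSpace ComplexOrder Pointwise

noncomputable section

lemma sph_ne_zero {n : ℕ} (x : Sph n) : (x : Euc n) ≠ 0 := by
  have := x.2
  rw [mem_sphere_zero_iff_norm] at this
  intro h
  rw [h] at this; simp at this

lemma sphProj_sph {n : ℕ} (x : Sph n) (hx : (x : Euc n) ≠ 0) : sphProj (x : Euc n) hx = x := by
  have hx1 : ‖(x : Euc n)‖ = 1 := mem_sphere_zero_iff_norm.mp x.2
  ext
  simp [sphProj, hx1]

lemma homExt_sph {n : ℕ} (h : Sph n → ℝ) (x : Sph n) : homExt h 0 (x : Euc n) = h x := by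
  rw [homExt, dif_neg (sph_ne_zero x), sphProj_sph x (sph_ne_zero x), Real.rpow_zero, mul_one]

lemma SphSmooth.continuous {n : ℕ} {h : Sph n → ℝ} (hs : SphSmooth h) : Continuous h := by
  have : Continuous fun x : Sph n => homExt h 0 (x : Euc n) :=
    (hs.continuousOn).comp_continuous continuous_subtype_val fun x => sph_ne_zero x
  simpa only [homExt_sph] using this

lemma sphSmooth_aux {n : ℕ} {f : Sph n → ℝ} (hf : SphSmooth f) (a : ℝ) :
    SphSmooth (fun x => a - f x) := by
  refine ((contDiffOn_const (c := a)).sub hf).congr fun x hx => ?_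
  have hx' : x ≠ 0 := hx
  simp [homExt, dif_neg hx', Real.rpow_zero]

lemma sphμ_openPos {n : ℕ} (hn : 2 ≤ n) : (sphμ n).IsOpenPosMeasure := by
  constructor
  intro U hU hUne
  obtain ⟨V, hV, rfl⟩ := isOpen_induced_iff.mp hU
  obtain ⟨x0, hx0⟩ := hUne
  have hms : MeasurableSet (Subtype.val ⁻¹' V : Set (Sph n)) :=
    hU.measurableSet
  rw [sphμ, Measure.toSphere_apply' _ hms]
  -- the cone
  set W : Set (Euc n) := ({(0:Euc n)}ᶜ ∩ (fun y : Euc n => ‖y‖⁻¹ • y) ⁻¹' V) ∩ Metric.ball 0 1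
    with hWdef
  have hWopen : IsOpen W := by
    apply IsOpen.inter _ Metric.isOpen_ball
    refine ContinuousOn.isOpen_inter_preimage ?_ isOpen_compl_singleton hV
    exact ContinuousOn.smul ((continuous_norm.continuousOn).inv₀
      (fun y hy => norm_ne_zero_iff.mpr hy)) continuousOn_id
  have hWne : W.Nonempty := by
    refine ⟨(2:ℝ)⁻¹ • (x0 : Euc n), ?_⟩
    have hx1 : ‖(x0 : Euc n)‖ = 1 := mem_sphere_zero_iff_norm.mp x0.2
    have hnorm : ‖(2:ℝ)⁻¹ • (x0 : Euc n)‖ = 2⁻¹ := by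
      rw [norm_smul, hx1]; norm_num
    constructor
    · constructor
      · simp only [Set.mem_compl_iff, Set.mem_singleton_iff]
        intro h
        rw [h, norm_zero] at hnorm; norm_num at hnorm
      · show ‖(2:ℝ)⁻¹ • (x0 : Euc n)‖⁻¹ • ((2:ℝ)⁻¹ • (x0 : Euc n)) ∈ V
        rw [hnorm, smul_smul]
        norm_num
        exact hx0
    · simp only [Metric.mem_ball, dist_zero_right, hnorm]; norm_num
  have hsub : W ⊆ Set.Ioo (0:ℝ) 1 • (Subtype.val '' (Subtype.val ⁻¹' V : Set (Sph n))) := by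
    rintro y ⟨⟨hy0, hyV⟩, hyb⟩
    have hy0' : y ≠ 0 := hy0
    have hny : ‖y‖ ≠ 0 := norm_ne_zero_iff.mpr hy0'
    have hmem : ‖y‖⁻¹ • y ∈ Metric.sphere (0 : Euc n) 1 := by
      rw [mem_sphere_zero_iff_norm, norm_smul, norm_inv, norm_norm, inv_mul_cancel₀ hny]
    refine Set.mem_smul.mpr ⟨‖y‖, ?_, ‖y‖⁻¹ • y, ?_, ?_⟩
    · exact ⟨norm_pos_iff.mpr hy0', by simpa [dist_zero_right] using hyb⟩
    · exact ⟨⟨‖y‖⁻¹ • y, hmem⟩, hyV, rfl⟩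
    · rw [smul_smul, mul_inv_cancel₀ hny, one_smul]
  have hWpos : 0 < volume W := hWopen.measure_pos volume hWne
  have hd : (Module.finrank ℝ (Euc n) : ENNReal) ≠ 0 := by
    simp [finrank_euclideanSpace_fin]; omega
  exact (ENNReal.mul_pos hd (lt_of_lt_of_le hWpos (measure_mono hsub)).ne').ne'

instance sphμ_finite (n : ℕ) : IsFiniteMeasure (sphμ n) := by
  unfold sphμ; infer_instance

lemma sph_memLp {n : ℕ} {g : Sph n → ℝ} (hg : Continuous g) (q : ENNReal) :
    MemLp g q (sphμ n) := by
  obtain ⟨C, hC⟩ := (isCompact_range hg.norm).bddAbove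
  exact MemLp.of_bound hg.aestronglyMeasurable C
    (Filter.Eventually.of_forall fun x => hC (Set.mem_range_self x))

lemma sph_integrable {n : ℕ} {g : Sph n → ℝ} (hg : Continuous g) :
    Integrable g (sphμ n) :=
  memLp_one_iff_integrable.mp (sph_memLp hg 1)

/-- slicing inequality for a linear operator `T` with `T𝟙 = c_T·𝟙`. -/
theorem stmt_2 {n : ℕ} (hn : 2 ≤ n) {p : ℝ} (hp : 1 < p)
    (T : (Sph n → ℝ) →ₗ[ℝ] (Sph n → ℝ))
    (hT : ∀ u : Sph n → ℝ, SphSmooth u → SphEven u → SphSmooth (T u) ∧ SphEven (T u))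
    (c : ℝ) (hc : 0 < c) (hT1 : T (fun _ => 1) = fun _ => c)
    (f : Sph n → ℝ) (hfs : SphSmooth f) (hfe : SphEven f) (hfpos : ∀ x, 0 ≤ f x)
    (hassoc : ∀ h : Sph n → ℝ, SphSmooth h → SphEven h → (∀ x, 0 ≤ T h x) →
      0 ≤ ∫ x, h x * f x ^ (p - 1) ∂ sphμ n) :
    sphLp p f ≤ (sphμ n Set.univ).toReal ^ (1 / p) / c * ⨆ z : Sph n, T f z := by
  haveI : (sphμ n).IsOpenPosMeasure := sphμ_openPos hn
  haveI : Nonempty (Fin n) := ⟨⟨0, by omega⟩⟩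
  haveI : Nontrivial (Euc n) := inferInstance
  haveI : Nonempty (Sph n) := ((NormedSpace.sphere_nonempty.mpr zero_le_one)).to_subtype
  have hp0 : (0:ℝ) < p := one_pos.trans hp
  have hp1 : (0:ℝ) < p - 1 := sub_pos.mpr hp
  have hfc : Continuous f := hfs.continuous
  have hTfc : Continuous (T f) := (hT f hfs hfe).1.continuous
  have hfpc : Continuous (fun x => f x ^ p) := hfc.rpow_const (fun x => Or.inr hp0.le)
  have hfp1c : Continuous (fun x => f x ^ (p-1)) := hfc.rpow_const (fun x => Or.inr hp1.le)
  set M : ℝ := ⨆ z : Sph n, T f z with hM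
  have hbdd : BddAbove (Set.range (T f)) := (isCompact_range hTfc).bddAbove
  have hle : ∀ z, T f z ≤ M := fun z => le_ciSup hbdd z
  set M' : ℝ := max M 0 with hM'
  set S : ℝ := (sphμ n Set.univ).toReal with hS
  have hS0 : (0:ℝ) ≤ S := ENNReal.toReal_nonneg
  set A : ℝ := ∫ x, f x ^ p ∂ sphμ n with hA
  set B : ℝ := ∫ x, f x ^ (p-1) ∂ sphμ n with hB
  have hApos : 0 ≤ A := integral_nonneg fun x => rpow_nonneg (hfpos x) p
  have hBpos : 0 ≤ B := integral_nonneg fun x => rpow_nonneg (hfpos x) (p-1)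
  -- key inequality from association
  have key : A ≤ M'/c * B := by
    have hTpos : ∀ x, 0 ≤ T (fun x => M'/c - f x) x := by
      have hfun : (fun x : Sph n => M'/c - f x) = (M'/c) • (fun _ => (1:ℝ)) - f := by
        funext x; simp
      intro x
      rw [hfun, map_sub, _root_.map_smul, hT1]
      have : ((M'/c) • (fun _ => c : Sph n → ℝ) - T f) x = M'/c * c - T f x := by
        simp
      rw [this, div_mul_cancel₀ _ hc.ne']
      have : T f x ≤ M' := (hle x).trans (le_max_left _ _)
      linarith
    have h1 := hassoc (fun x => M'/c - f x) (sphSmooth_aux hfs _)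
      (fun x => by simp [hfe x]) hTpos
    have hcompute : ∀ x : Sph n, (M'/c - f x) * f x ^ (p-1)
        = (M'/c) * f x ^ (p-1) - f x ^ p := by
      intro x
      rcases eq_or_lt_of_le (hfpos x) with h | h
      · rw [← h, Real.zero_rpow hp1.ne', Real.zero_rpow hp0.ne']; ring
      · have hfx : f x * f x ^ (p-1) = f x ^ p := by
          calc f x * f x ^ (p-1) = f x ^ (1:ℝ) * f x ^ (p-1) := by rw [Real.rpow_one]
            _ = f x ^ (1 + (p-1)) := (Real.rpow_add h 1 (p-1)).symm
            _ = f x ^ p := by ring_nf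
        rw [sub_mul, hfx]
    rw [show (fun x : Sph n => (M'/c - f x) * f x ^ (p-1))
        = (fun x => (M'/c) * f x ^ (p-1) - f x ^ p) from funext hcompute] at h1
    rw [integral_sub ((sph_integrable hfp1c).const_mul _) (sph_integrable hfpc),
      integral_const_mul] at h1
    linarith
  -- Hölder
  have holder : B ≤ A ^ (1 - 1/p) * S ^ (1/p) := by
    have hpq : (p/(p-1)).HolderConjugate p := (Real.HolderConjugate.conjExponent hp).symm
    have h2 := integral_mul_le_Lp_mul_Lq_of_nonneg hpq
      (f := fun x => f x ^ (p-1)) (g := fun _ => (1:ℝ))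
      (Filter.Eventually.of_forall fun x => rpow_nonneg (hfpos x) _)
      (Filter.Eventually.of_forall fun _ => zero_le_one)
      (sph_memLp hfp1c _) (memLp_const 1)
    simp only [mul_one, Real.one_rpow] at h2
    have e1 : ∀ x : Sph n, (f x ^ (p-1)) ^ (p/(p-1)) = f x ^ p := by
      intro x
      rw [← Real.rpow_mul (hfpos x)]
      congr 1
      field_simp
    rw [show (fun x : Sph n => (f x ^ (p-1)) ^ (p/(p-1))) = fun x => f x ^ p from funext e1] at h2
    rw [integral_const, smul_eq_mul, mul_one] at h2
    have e2 : 1/(p/(p-1)) = 1 - 1/p := by field_simp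
    rw [e2] at h2
    exact h2
  rcases eq_or_lt_of_le hApos with hA0 | hA0
  · -- degenerate case : f ≡ 0
    have hae : (fun x => f x ^ p) =ᵐ[sphμ n] 0 :=
      (integral_eq_zero_iff_of_nonneg (fun x => rpow_nonneg (hfpos x) p)
        (sph_integrable hfpc)).mp hA0.symm
    have heq : (fun x : Sph n => f x ^ p) = 0 :=
      (Continuous.ae_eq_iff_eq (sphμ n) hfpc continuous_const).mp hae
    have hfz : f = 0 := by
      funext x
      have := congrFun heq x
      simpa using (Real.rpow_eq_zero (hfpos x) hp0.ne').mp this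
    have hM0 : M = 0 := by
      rw [hM, hfz, map_zero]
      simp
    have hLp0 : sphLp p f = 0 := by
      rw [hfz]
      simp [sphLp, Real.zero_rpow hp0.ne', Real.zero_rpow (one_div_ne_zero hp0.ne'),
        Real.zero_rpow (inv_ne_zero hp0.ne')]
    rw [hLp0, hM0, mul_zero]
  · -- main case
    have hM'pos : 0 < M' := by
      by_contra hcon
      push_neg at hcon
      have : M' = 0 := le_antisymm hcon (le_max_right _ _)
      rw [this] at key
      simp at key
      linarith
    have hMM' : M' = M := by
      rcases le_or_gt M 0 with h | h
      · exfalso; rw [hM', max_eq_right h] at hM'pos; exact lt_irrefl _ hM'pos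
      · rw [hM', max_eq_left h.le]
    have chain : A ≤ M'/c * (A ^ (1 - 1/p) * S ^ (1/p)) :=
      key.trans (by
        apply mul_le_mul_of_nonneg_left holder
        positivity)
    have hsplit : A = A ^ (1/p) * A ^ (1 - 1/p) := by
      rw [← Real.rpow_add hA0]
      norm_num
    have hApow : 0 < A ^ (1 - 1/p) := Real.rpow_pos_of_pos hA0 _
    have final : A ^ (1/p) ≤ M'/c * S ^ (1/p) := by
      have : A ^ (1/p) * A ^ (1 - 1/p) ≤ (M'/c * S ^ (1/p)) * A ^ (1 - 1/p) := by
        rw [← hsplit]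
        calc A ≤ M'/c * (A ^ (1 - 1/p) * S ^ (1/p)) := chain
          _ = (M'/c * S ^ (1/p)) * A ^ (1 - 1/p) := by ring
      exact le_of_mul_le_mul_right this hApow
    have hLp : sphLp p f = A ^ (1/p) := by
      rw [sphLp, hA]
      congr 1
      exact integral_congr_ae (Filter.Eventually.of_forall fun x => by
        show |f x| ^ p = f x ^ p
        rw [abs_of_nonneg (hfpos x)])
    rw [hLp, ← hMM']
    calc A ^ (1/p) ≤ M'/c * S ^ (1/p) := final
      _ = S ^ (1/p) / c * M' := by ring
end
end
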